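/- arXiv:2407.09955 — 2 statements merged into one kernel-verified Lean document; each statement's English description precedes it below -/
import Mathlib

section
/- Let σ(t) = 1/(1 + e^{-t}), let x_1, ..., x_n ∈ ℝ^m and y_1, ..., y_n ∈ [0,1]. For every β ∈ ℝ^m, the Hessian matrix H(β) = Σ_{i=1}^n Δ_i x_i x_iᵀ of L_2 (where σ_i = σ(⟨β, x_i⟩) and Δ_i = (4σ_i - 6σ_i² - 2y_i + 4y_iσ_i)σ_i(1-σ_i)) satisfies H(β) ⪯ 0.155 · XᵀX in the Loewner order, where X is the n×m matrix with rows x_i. -/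
/-! The weight `Δᵢ` is affine in `yᵢ`, and its value at `yᵢ = 1` is its value at `yᵢ = 0` with
`σᵢ` replaced by `1 - σᵢ`. So it suffices that the quartic `(4s - 6s²)s(1 - s)` stays below
`0.155` on `[0, 1]` (its maximum, near `s ≈ 0.3856`, is about `0.1541`). Then
`0.155 · XᵀX - H(β) = ∑ᵢ (0.155 - Δᵢ) xᵢxᵢᵀ` is a nonnegative combination of rank-one
positive semidefinite matrices. -/

open Matrix

/-- The logistic sigmoid function `σ(t) = 1/(1 + e^{-t})`. -/
noncomputable def sigmoid (t : ℝ) : ℝ := 1 / (1 + Real.exp (-t))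

lemma sigmoid_mem_Icc (t : ℝ) : sigmoid t ∈ Set.Icc (0 : ℝ) 1 := by
  have hexp := Real.exp_pos (-t)
  unfold sigmoid
  constructor
  · positivity
  · rw [div_le_one (by positivity)]
    linarith

/-- `Δᵢ = sigmoidHessianWeight σᵢ yᵢ`. -/
noncomputable def sigmoidHessianWeight (s y : ℝ) : ℝ :=
  (4 * s - 6 * s ^ 2 - 2 * y + 4 * y * s) * s * (1 - s)

lemma sigmoidHessianWeight_eq (s y : ℝ) :
    sigmoidHessianWeight s y =
      (1 - y) * sigmoidHessianWeight s 0 + y * sigmoidHessianWeight (1 - s) 0 := by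
  unfold sigmoidHessianWeight
  ring

lemma sigmoidHessianWeight_zero_le {s : ℝ} (hs : s ∈ Set.Icc (0 : ℝ) 1) :
    sigmoidHessianWeight s 0 ≤ 0.155 := by
  obtain ⟨hs0, hs1⟩ := hs
  unfold sigmoidHessianWeight
  nlinarith [mul_nonneg (mul_nonneg hs0 (sub_nonneg.2 hs1)) (sq_nonneg (s - 0.3856)),
    mul_nonneg (sub_nonneg.2 hs1) (sq_nonneg (s - 0.3853)), sq_nonneg (s - 0.3853)]

lemma sigmoidHessianWeight_le {s y : ℝ} (hs : s ∈ Set.Icc (0 : ℝ) 1)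
    (hy : y ∈ Set.Icc (0 : ℝ) 1) : sigmoidHessianWeight s y ≤ 0.155 := by
  have h₀ := sigmoidHessianWeight_zero_le hs
  have h₁ := sigmoidHessianWeight_zero_le (s := 1 - s) ⟨by linarith [hs.2], by linarith [hs.1]⟩
  rw [sigmoidHessianWeight_eq]
  linarith [mul_le_mul_of_nonneg_left h₀ (sub_nonneg.2 hy.2), mul_le_mul_of_nonneg_left h₁ hy.1]

lemma Matrix.transpose_mul_self_eq_sum_vecMulVec {ι n R : Type*} [Fintype ι] [CommSemiring R]
    (X : Matrix ι n R) : Xᵀ * X = ∑ i, vecMulVec (X i) (X i) := by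
  ext j k
  simp [mul_apply, vecMulVec_apply, sum_apply]

lemma Matrix.posSemidef_smul_sum_vecMulVec_sub {ι n : Type*} [Fintype ι] [Fintype n]
    (v : ι → n → ℝ) (c : ι → ℝ) {C : ℝ} (hc : ∀ i, c i ≤ C) :
    (C • ∑ i, vecMulVec (v i) (v i) - ∑ i, c i • vecMulVec (v i) (v i)).PosSemidef := by
  rw [Finset.smul_sum, ← Finset.sum_sub_distrib]
  refine posSemidef_sum _ fun i _ => ?_
  rw [← sub_smul]
  simpa using (posSemidef_vecMulVec_self_star (v i)).smul (sub_nonneg.2 (hc i))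

/-- For labels `yᵢ ∈ [0,1]`, the Hessian `H(β) = ∑ᵢ Δᵢ xᵢ xᵢᵀ` of the sigmoid
least-squares cost `L₂` (with `σᵢ = σ(⟨β, xᵢ⟩)` and
`Δᵢ = (4σᵢ - 6σᵢ² - 2yᵢ + 4yᵢσᵢ)σᵢ(1-σᵢ)`) satisfies `H(β) ⪯ 0.155 · XᵀX` in the Loewner
order, where `X` is the matrix whose rows are the `xᵢ`. -/
theorem sigmoid_hessian_loewner_bound (n m : ℕ) (X : Matrix (Fin n) (Fin m) ℝ)
    (y : Fin n → ℝ) (hy : ∀ i, y i ∈ Set.Icc (0 : ℝ) 1) (β : Fin m → ℝ) :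
    ((0.155 : ℝ) • (Xᵀ * X) -
      ∑ i, ((4 * sigmoid (β ⬝ᵥ X i) - 6 * sigmoid (β ⬝ᵥ X i) ^ 2 - 2 * y i +
            4 * y i * sigmoid (β ⬝ᵥ X i)) * sigmoid (β ⬝ᵥ X i) *
          (1 - sigmoid (β ⬝ᵥ X i))) • Matrix.vecMulVec (X i) (X i)).PosSemidef := by
  rw [transpose_mul_self_eq_sum_vecMulVec]
  exact posSemidef_smul_sum_vecMulVec_sub _ _ fun i =>
    sigmoidHessianWeight_le (sigmoid_mem_Icc _) (hy i)
end

section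
/- Let X be an n×m real matrix with entries x_{ij} and ε > 0, and let B̄ be the m×m diagonal matrix with diagonal entries B̄_kk = ε + 2 Σ_{j=1}^m Σ_{i=1}^n |x_{ij} x_{ik}|. Then 2·XᵀX ⪯ B̄ in the Loewner order and B̄ is positive definite, hence invertible; consequently B̄ is a valid simplified fixed Hessian upper bound for the linear regression cost L_0(β) = Σ_i (⟨β, x_i⟩ - y_i)², whose Hessian is 2·XᵀX at every β. -/
/-!
By AM-GM, `v_j A_jk v_k ≤ |A_jk| (v_j² + v_k²) / 2`, so for a symmetric real matrix `A` the
quadratic form satisfies `vᵀ A v ≤ ∑_k (∑_j |A_jk|) v_k²`: a diagonal matrix dominating the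
absolute column sums of `A` dominates `A` in the Loewner order. For `A = 2 XᵀX` these column
sums are `∑_j |2 ∑_i x_ij x_ik| ≤ 2 ∑_j ∑_i |x_ij x_ik|`, which gives `2 XᵀX ⪯ B̄`, and `ε > 0`
makes `B̄` positive definite. The least-squares cost is quadratic, so its gradient
`β ↦ ∑_i 2 (⟨β, x_i⟩ - y_i) x_i` is affine with linear part `2 ∑_i ⟨x_i, ·⟩ x_i = 2 XᵀX`.
-/

open Matrix Finset
open scoped InnerProductSpace

theorem mul_mul_le_abs_mul_add_sq_div_two (a b c : ℝ) : a * b * c ≤ |b| * (a ^ 2 + c ^ 2) / 2 := by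
  nlinarith [mul_nonneg (sub_nonneg.2 (le_abs_self b)) (sq_nonneg (a + c)),
    mul_nonneg (neg_le_iff_add_nonneg.1 (neg_abs_le b)) (sq_nonneg (a - c))]

namespace Matrix

variable {ι κ : Type*} [Fintype ι] [Fintype κ]

theorem IsHermitian.dotProduct_mulVec_le {A : Matrix ι ι ℝ} (hA : A.IsHermitian) (v : ι → ℝ) :
    v ⬝ᵥ A *ᵥ v ≤ ∑ k, (∑ j, |A j k|) * v k ^ 2 := by
  have hswap : ∑ j, ∑ k, |A j k| * v j ^ 2 = ∑ j, ∑ k, |A j k| * v k ^ 2 := by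
    rw [sum_comm]
    refine sum_congr rfl fun k _ => sum_congr rfl fun j _ => ?_
    rw [← hA.apply k j, star_trivial]
  calc v ⬝ᵥ A *ᵥ v = ∑ j, ∑ k, v j * A j k * v k := by
        simp only [dotProduct, mulVec, mul_sum, mul_assoc]
    _ ≤ ∑ j, ∑ k, |A j k| * (v j ^ 2 + v k ^ 2) / 2 := by
        gcongr with j _ k _
        exact mul_mul_le_abs_mul_add_sq_div_two _ _ _
    _ = ∑ k, (∑ j, |A j k|) * v k ^ 2 := by
        simp only [mul_add, add_div, sum_add_distrib, ← sum_div, hswap, sum_mul]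
        rw [sum_comm]
        ring

theorem posSemidef_diagonal_sub_of_sum_abs_le [DecidableEq ι] {A : Matrix ι ι ℝ}
    (hA : A.IsHermitian) {d : ι → ℝ} (hd : ∀ k, ∑ j, |A j k| ≤ d k) :
    (diagonal d - A).PosSemidef := by
  refine PosSemidef.of_dotProduct_mulVec_nonneg ((isHermitian_diagonal d).sub hA) fun v => ?_
  have hdiag : v ⬝ᵥ diagonal d *ᵥ v = ∑ k, d k * v k ^ 2 := by
    simp only [dotProduct, mulVec_diagonal]
    exact sum_congr rfl fun k _ => by ring
  have hle : ∑ k, (∑ j, |A j k|) * v k ^ 2 ≤ ∑ k, d k * v k ^ 2 := by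
    gcongr
    exact hd _
  rw [star_trivial, sub_mulVec, dotProduct_sub, hdiag, sub_nonneg]
  exact (hA.dotProduct_mulVec_le v).trans hle

theorem posSemidef_diagonal_sub_two_smul_transpose_mul_self [DecidableEq κ]
    (X : Matrix ι κ ℝ) {ε : ℝ} (hε : 0 ≤ ε) :
    (diagonal (fun k => ε + 2 * ∑ j, ∑ i, |X i j * X i k|) - (2 : ℝ) • (Xᵀ * X)).PosSemidef := by
  have hsymm : ((2 : ℝ) • (Xᵀ * X)).IsHermitian :=
    isHermitian_iff_isSymm.2 (IsSymm.smul (by simp [IsSymm, transpose_mul]) 2)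
  refine posSemidef_diagonal_sub_of_sum_abs_le hsymm fun k => ?_
  calc ∑ j, |((2 : ℝ) • (Xᵀ * X)) j k| = 2 * ∑ j, |∑ i, X i j * X i k| := by
        simp [mul_apply, ← mul_sum, abs_mul]
    _ ≤ 2 * ∑ j, ∑ i, |X i j * X i k| := by
        gcongr with j _
        exact abs_sum_le_sum_abs _ _
    _ ≤ ε + 2 * ∑ j, ∑ i, |X i j * X i k| := le_add_of_nonneg_left hε

theorem toEuclideanLin_transpose_mul_self [DecidableEq κ] (X : Matrix ι κ ℝ) :
    (toEuclideanLin (Xᵀ * X)).toContinuousLinearMap =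
      ∑ i, (innerSL ℝ (WithLp.toLp 2 (X i))).smulRight (WithLp.toLp 2 (X i)) := by
  ext v k
  simp only [LinearMap.coe_toContinuousLinearMap', ofLp_toLpLin, toLin'_apply, mulVec,
    dotProduct, mul_apply, transpose_apply, sum_mul, _root_.sum_apply,
    ContinuousLinearMap.smulRight_apply, coe_innerSL_apply, PiLp.inner_apply, RCLike.inner_apply,
    Real.ringHom_apply, WithLp.ofLp_sum, WithLp.ofLp_smul, Finset.sum_apply, Pi.smul_apply,
    smul_eq_mul]
  rw [sum_comm]
  exact sum_congr rfl fun i _ => sum_congr rfl fun j _ => by ring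

end Matrix

section LeastSquares

variable {E : Type*} [NormedAddCommGroup E] [InnerProductSpace ℝ E] {ι : Type*} [Fintype ι]

theorem hasFDerivAt_inner_const_right (v β : E) :
    HasFDerivAt (fun b => ⟪b, v⟫_ℝ) (innerSL ℝ v) β :=
  (innerSL ℝ v).hasFDerivAt.congr_of_eventuallyEq (.of_forall fun b => real_inner_comm v b)

theorem hasGradientAt_sum_inner_sub_sq [CompleteSpace E] (x : ι → E) (y : ι → ℝ) (β : E) :
    HasGradientAt (fun b => ∑ i, (⟪b, x i⟫_ℝ - y i) ^ 2)
      (∑ i, (2 * (⟪β, x i⟫_ℝ - y i)) • x i) β := by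
  rw [hasGradientAt_iff_hasFDerivAt]
  refine (HasFDerivAt.fun_sum (u := univ) fun i _ =>
    ((hasFDerivAt_inner_const_right (x i) β).sub_const (y i)).pow 2).congr_fderiv ?_
  ext h
  simp [real_inner_comm h]

theorem hasFDerivAt_sum_inner_sub_smul (x : ι → E) (y : ι → ℝ) (β : E) :
    HasFDerivAt (fun b => ∑ i, (2 * (⟪b, x i⟫_ℝ - y i)) • x i)
      ((2 : ℝ) • ∑ i, (innerSL ℝ (x i)).smulRight (x i)) β := by
  rw [smul_sum]
  refine HasFDerivAt.fun_sum fun i _ =>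
    (((hasFDerivAt_inner_const_right (x i) β).sub_const (y i)).const_mul 2).smul_const (x i)
      |>.congr_fderiv ?_
  ext h
  simp [smul_smul]

end LeastSquares

/-- For an `n×m` real matrix `X` and `ε > 0`, the diagonal matrix `B̄` with
entries `B̄_kk = ε + 2 ∑ⱼ ∑ᵢ |x_ij x_ik|` satisfies `2·XᵀX ⪯ B̄` in the Loewner order and is
positive definite, hence invertible; consequently `B̄` is a valid simplified fixed Hessian upper
bound for the linear regression cost `L₀(β) = ∑ᵢ (⟨β, xᵢ⟩ - yᵢ)²`, whose Hessian (the Fréchet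
derivative of the gradient map) is `2·XᵀX` at every `β`. -/
theorem linear_regression_sfh_bound (n m : ℕ) (X : Matrix (Fin n) (Fin m) ℝ)
    (y : Fin n → ℝ) (ε : ℝ) (hε : 0 < ε) :
    let Bbar : Matrix (Fin m) (Fin m) ℝ :=
      Matrix.diagonal (fun k => ε + 2 * ∑ j, ∑ i, |X i j * X i k|)
    let x : Fin n → EuclideanSpace ℝ (Fin m) := fun i => (WithLp.equiv 2 (Fin m → ℝ)).symm (X i)
    (Bbar - (2 : ℝ) • (Xᵀ * X)).PosSemidef ∧ Bbar.PosDef ∧ IsUnit Bbar ∧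
    ∀ β : EuclideanSpace ℝ (Fin m),
      HasFDerivAt
        (fun β' : EuclideanSpace ℝ (Fin m) =>
          gradient (fun b : EuclideanSpace ℝ (Fin m) => ∑ i, (⟪b, x i⟫_ℝ - y i) ^ 2) β')
        (LinearMap.toContinuousLinearMap (Matrix.toEuclideanLin ((2 : ℝ) • (Xᵀ * X)))) β := by
  intro Bbar x
  have hpd : Bbar.PosDef := PosDef.diagonal fun k => by positivity
  refine ⟨posSemidef_diagonal_sub_two_smul_transpose_mul_self X hε.le, hpd, hpd.isUnit,
    fun β => ?_⟩
  have hHessian : LinearMap.toContinuousLinearMap (toEuclideanLin ((2 : ℝ) • (Xᵀ * X))) =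
      (2 : ℝ) • ∑ i, (innerSL ℝ (x i)).smulRight (x i) := by
    rw [map_smul, map_smul, toEuclideanLin_transpose_mul_self]
    rfl
  rw [gradient_eq fun b => hasGradientAt_sum_inner_sub_sq x y b, hHessian]
  exact hasFDerivAt_sum_inner_sub_smul x y β
end
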